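/- Let A be an L-invariant subset of the Manhattan plane ℝ₁². Then the topological closure of A, regarded as a metric space with the metric induced from ℝ₁², is hyperconvex. -/

import Mathlib

open Set

/-- The taxicab (ℓ¹) distance on the plane, making `ℝ × ℝ` the Manhattan plane ℝ₁². -/
def taxiDist (p q : ℝ × ℝ) : ℝ := |p.1 - q.1| + |p.2 - q.2|

/-- Horizontal hatching `L_x(A)`. -/
def hatchX (A : Set (ℝ × ℝ)) : Set (ℝ × ℝ) :=
  {p | ∃ a ∈ A, ∃ b ∈ A, a.2 = p.2 ∧ b.2 = p.2 ∧ a.1 ≤ p.1 ∧ p.1 ≤ b.1}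

/-- Vertical hatching `L_y(A)`. -/
def hatchY (A : Set (ℝ × ℝ)) : Set (ℝ × ℝ) :=
  {p | ∃ a ∈ A, ∃ b ∈ A, a.1 = p.1 ∧ b.1 = p.1 ∧ a.2 ≤ p.2 ∧ p.2 ≤ b.2}

/-- Double hatching `L(A) = L_x(L_y(A))`. -/
def doubleHatch (A : Set (ℝ × ℝ)) : Set (ℝ × ℝ) := hatchX (hatchY A)

/-- A subset `S` of the Manhattan plane, regarded as a metric space with the induced
taxicab metric, is hyperconvex: for every family of points of `S` and nonnegative radii
with `d₁(x i, x j) ≤ r i + r j`, the closed balls (in `S`) have a common point. -/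
def TaxiHyperconvexOn (S : Set (ℝ × ℝ)) : Prop :=
  ∀ (I : Type) (x : I → ℝ × ℝ) (r : I → ℝ),
    (∀ i, x i ∈ S) → (∀ i, 0 ≤ r i) →
    (∀ i j, taxiDist (x i) (x j) ≤ r i + r j) →
    ∃ y ∈ S, ∀ i, taxiDist (x i) y ≤ r i

/-!
In the coordinates `u = x + y`, `v = x - y` the taxicab metric becomes the sup metric, so the
intersection of the balls is a diamond `α ≤ u ≤ β, γ ≤ v ≤ δ`, nonempty by the one-dimensional
Helly property, and by compactness it suffices that `A` meets every `ε`-neighbourhood of it.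
Points of `A` near the centres of balls that almost touch its four sides lie beyond these sides.
After a reflection the diamond is at least as wide as tall. A connected piece of `A` above the
bottom vertex then crosses the vertical line through that vertex, one below the top vertex
crosses the vertical line through it, and in the strip between the two lines, where the diamond
is the band `γ ≤ v ≤ δ`, the intermediate value theorem for `v` yields the point. These pieces
are connected because cutting a connected orthoconvex set along an axis-parallel line leaves it
connected, its section on the line being an interval.
-/

section Topology

variable {X α : Type*} [TopologicalSpace X] [LinearOrder α] [TopologicalSpace α]
  [OrderClosedTopology α] {B : Set X} {f : X → α}

theorem IsPreconnected.inter_preimage_Ici (hB : IsPreconnected B) (hf : Continuous f) {t : α}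
    (ht : IsPreconnected (B ∩ f ⁻¹' {t})) : IsPreconnected (B ∩ f ⁻¹' Ici t) := by
  rw [isPreconnected_iff_subset_of_disjoint] at hB ht ⊢
  intro U V hU hV hcover hdisj
  have hlevel : B ∩ f ⁻¹' {t} ⊆ B ∩ f ⁻¹' Ici t := fun p hp => ⟨hp.1, le_of_eq hp.2.symm⟩
  have hlevel_disj : B ∩ f ⁻¹' {t} ∩ (U ∩ V) = ∅ :=
    subset_empty_iff.1 (hdisj ▸ inter_subset_inter_left _ hlevel)
  wlog hLU : B ∩ f ⁻¹' {t} ⊆ U generalizing U V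
  · rcases ht U V hU hV (hlevel.trans hcover) hlevel_disj with h | h
    · exact absurd h hLU
    · rw [inter_comm U V] at hdisj hlevel_disj
      exact (this V U hV hU (union_comm U V ▸ hcover) hdisj hlevel_disj h).symm
  -- The level set lies in `U`, so `U ∪ {f < t}` and `V ∩ {t < f}` would separate `B`.
  have hcover' : B ⊆ (U ∪ f ⁻¹' Iio t) ∪ (V ∩ f ⁻¹' Ioi t) := by
    intro p hp
    rcases lt_trichotomy (f p) t with h | h | h
    · exact Or.inl (Or.inr h)
    · exact Or.inl (Or.inl (hLU ⟨hp, h⟩))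
    · exact (hcover ⟨hp, h.le⟩).imp (fun h' => Or.inl h') (fun h' => ⟨h', h⟩)
  have hdisj' : B ∩ ((U ∪ f ⁻¹' Iio t) ∩ (V ∩ f ⁻¹' Ioi t)) = ∅ := by
    refine subset_empty_iff.1 fun p ⟨hpB, hpU, hpV, hpt⟩ => hdisj.subset ⟨⟨hpB, hpt.le⟩, ?_, hpV⟩
    exact hpU.resolve_right (not_lt.2 hpt.le)
  rcases hB _ _ (hU.union (isOpen_Iio.preimage hf)) (hV.inter (isOpen_Ioi.preimage hf))
    hcover' hdisj' with h | h
  · exact Or.inl fun p ⟨hpB, hpt⟩ => (h hpB).resolve_right (not_lt.2 hpt)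
  · exact Or.inr fun p hp => (h hp.1).1

theorem IsPreconnected.inter_preimage_Iic (hB : IsPreconnected B) (hf : Continuous f) {t : α}
    (ht : IsPreconnected (B ∩ f ⁻¹' {t})) : IsPreconnected (B ∩ f ⁻¹' Iic t) :=
  hB.inter_preimage_Ici (α := αᵒᵈ) (f := OrderDual.toDual ∘ f) hf ht

theorem IsPreconnected.exists_apply_mem_Icc (hB : IsPreconnected B) (hf : ContinuousOn f B)
    {p q : X} (hp : p ∈ B) (hq : q ∈ B) {a b : α} (hab : a ≤ b) (hpb : f p ≤ b) (haq : a ≤ f q) :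
    ∃ z ∈ B, f z ∈ Icc a b := by
  by_cases hap : a ≤ f p
  · exact ⟨p, hp, hap, hpb⟩
  by_cases hqb : f q ≤ b
  · exact ⟨q, hq, haq, hqb⟩
  obtain ⟨z, hz, hza⟩ := hB.intermediate_value hp hq hf ⟨(not_le.1 hap).le, haq⟩
  exact ⟨z, hz, hza.symm ▸ ⟨le_rfl, hab⟩⟩

end Topology

def Orthoconvex (B : Set (ℝ × ℝ)) : Prop :=
  hatchX B ⊆ B ∧ hatchY B ⊆ B

theorem subset_hatchX (B : Set (ℝ × ℝ)) : B ⊆ hatchX B :=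
  fun p hp => ⟨p, hp, p, hp, rfl, rfl, le_rfl, le_rfl⟩

theorem subset_hatchY (B : Set (ℝ × ℝ)) : B ⊆ hatchY B :=
  fun p hp => ⟨p, hp, p, hp, rfl, rfl, le_rfl, le_rfl⟩

theorem hatchX_mono {B C : Set (ℝ × ℝ)} (h : B ⊆ C) : hatchX B ⊆ hatchX C :=
  fun _ ⟨a, ha, b, hb, hab⟩ => ⟨a, h ha, b, h hb, hab⟩

theorem orthoconvex_of_doubleHatch_eq {B : Set (ℝ × ℝ)} (hB : doubleHatch B = B) :
    Orthoconvex B := by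
  rw [doubleHatch] at hB
  exact ⟨(hatchX_mono (subset_hatchY B)).trans hB.le, (subset_hatchX (hatchY B)).trans hB.le⟩

theorem orthoconvex_preimage_fst {S : Set ℝ} (hS : S.OrdConnected) :
    Orthoconvex (Prod.fst ⁻¹' S) :=
  ⟨fun _ ⟨_, ha, _, hb, _, _, hap, hpb⟩ => hS.out ha hb ⟨hap, hpb⟩,
    fun p ⟨_, ha, _, _, hap, _⟩ => show p.1 ∈ S from hap ▸ ha⟩

namespace Orthoconvex

variable {B C : Set (ℝ × ℝ)}

theorem inter (hB : Orthoconvex B) (hC : Orthoconvex C) : Orthoconvex (B ∩ C) :=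
  ⟨fun _ ⟨a, ha, b, hb, hab⟩ => ⟨hB.1 ⟨a, ha.1, b, hb.1, hab⟩, hC.1 ⟨a, ha.2, b, hb.2, hab⟩⟩,
    fun _ ⟨a, ha, b, hb, hab⟩ => ⟨hB.2 ⟨a, ha.1, b, hb.1, hab⟩, hC.2 ⟨a, ha.2, b, hb.2, hab⟩⟩⟩

theorem isPreconnected_inter_fst_eq (hB : Orthoconvex B) (t : ℝ) :
    IsPreconnected (B ∩ Prod.fst ⁻¹' {t}) := by
  have hsection : ({s | (t, s) ∈ B} : Set ℝ).OrdConnected :=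
    ⟨fun _ ha _ hb _ hs => hB.2 ⟨_, ha, _, hb, rfl, rfl, hs⟩⟩
  convert isPreconnected_singleton.prod hsection.isPreconnected using 1
  ext ⟨x, y⟩
  simp only [mem_inter_iff, mem_preimage, mem_singleton_iff, mem_prod, mem_ofPred_eq]
  exact ⟨fun ⟨h, hx⟩ => ⟨hx, hx ▸ h⟩, fun ⟨hx, h⟩ => ⟨hx ▸ h, hx⟩⟩

theorem isPreconnected_inter_snd_eq (hB : Orthoconvex B) (t : ℝ) :
    IsPreconnected (B ∩ Prod.snd ⁻¹' {t}) := by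
  have hsection : ({s | (s, t) ∈ B} : Set ℝ).OrdConnected :=
    ⟨fun _ ha _ hb _ hs => hB.1 ⟨_, ha, _, hb, rfl, rfl, hs⟩⟩
  convert hsection.isPreconnected.prod isPreconnected_singleton using 1
  ext ⟨x, y⟩
  simp only [mem_inter_iff, mem_preimage, mem_singleton_iff, mem_prod, mem_ofPred_eq]
  exact ⟨fun ⟨h, hy⟩ => ⟨hy ▸ h, hy⟩, fun ⟨h, hy⟩ => ⟨hy ▸ h, hy⟩⟩

theorem isPreconnected_inter_fst_Ici (hB : Orthoconvex B) (hB' : IsPreconnected B) (t : ℝ) :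
    IsPreconnected (B ∩ Prod.fst ⁻¹' Ici t) :=
  hB'.inter_preimage_Ici continuous_fst (hB.isPreconnected_inter_fst_eq t)

theorem isPreconnected_inter_fst_Iic (hB : Orthoconvex B) (hB' : IsPreconnected B) (t : ℝ) :
    IsPreconnected (B ∩ Prod.fst ⁻¹' Iic t) :=
  hB'.inter_preimage_Iic continuous_fst (hB.isPreconnected_inter_fst_eq t)

theorem isPreconnected_inter_snd_Ici (hB : Orthoconvex B) (hB' : IsPreconnected B) (t : ℝ) :
    IsPreconnected (B ∩ Prod.snd ⁻¹' Ici t) :=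
  hB'.inter_preimage_Ici continuous_snd (hB.isPreconnected_inter_snd_eq t)

theorem isPreconnected_inter_snd_Iic (hB : Orthoconvex B) (hB' : IsPreconnected B) (t : ℝ) :
    IsPreconnected (B ∩ Prod.snd ⁻¹' Iic t) :=
  hB'.inter_preimage_Iic continuous_snd (hB.isPreconnected_inter_snd_eq t)

theorem preimage_reflect (hB : Orthoconvex B) : Orthoconvex (Prod.map id Neg.neg ⁻¹' B) := by
  constructor
  · rintro p ⟨a, ha, b, hb, ha2, hb2, hap, hpb⟩
    exact hB.1 ⟨_, ha, _, hb, congrArg Neg.neg ha2, congrArg Neg.neg hb2, hap, hpb⟩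
  · rintro p ⟨a, ha, b, hb, ha1, hb1, hap, hpb⟩
    exact hB.2 ⟨_, hb, _, ha, hb1, ha1, neg_le_neg hpb, neg_le_neg hap⟩

end Orthoconvex

theorem isPreconnected_preimage_reflect {B : Set (ℝ × ℝ)} (hB : IsPreconnected B) :
    IsPreconnected (Prod.map id Neg.neg ⁻¹' B) :=
  ((Homeomorph.refl ℝ).prodCongr (Homeomorph.neg ℝ)).isPreconnected_preimage.2 hB

def diamond (α β γ δ : ℝ) : Set (ℝ × ℝ) :=
  {p | p.1 + p.2 ∈ Icc α β ∧ p.1 - p.2 ∈ Icc γ δ}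

theorem isCompact_diamond (α β γ δ : ℝ) : IsCompact (diamond α β γ δ) := by
  have : diamond α β γ δ =
      (fun q : ℝ × ℝ => ((q.1 + q.2) / 2, (q.1 - q.2) / 2)) '' Icc α β ×ˢ Icc γ δ := by
    ext p
    refine ⟨fun hp => ⟨(p.1 + p.2, p.1 - p.2), hp, by ext <;> ring⟩, ?_⟩
    rintro ⟨q, hq, rfl⟩
    exact ⟨by convert hq.1 using 1; ring, by convert hq.2 using 1; ring⟩
  rw [this]
  exact (isCompact_Icc.prod isCompact_Icc).image (by fun_prop)

theorem diamond_mono {α β γ δ α' β' γ' δ' : ℝ} (hα : α' ≤ α) (hβ : β ≤ β') (hγ : γ' ≤ γ)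
    (hδ : δ ≤ δ') : diamond α β γ δ ⊆ diamond α' β' γ' δ' :=
  fun _ ⟨hu, hv⟩ => ⟨Icc_subset_Icc hα hβ hu, Icc_subset_Icc hγ hδ hv⟩

theorem mem_diamond_of_forall_pos {α β γ δ : ℝ} {p : ℝ × ℝ}
    (h : ∀ ε > 0, p ∈ diamond (α - ε) (β + ε) (γ - ε) (δ + ε)) : p ∈ diamond α β γ δ := by
  simp only [diamond, mem_ofPred_eq, mem_Icc] at h ⊢
  exact ⟨⟨le_of_forall_sub_le fun ε hε => (h ε hε).1.1,
    le_of_forall_pos_le_add fun ε hε => (h ε hε).1.2⟩,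
    le_of_forall_sub_le fun ε hε => (h ε hε).2.1,
    le_of_forall_pos_le_add fun ε hε => (h ε hε).2.2⟩

theorem exists_mem_closure_diamond {A : Set (ℝ × ℝ)} {α β γ δ : ℝ}
    (h : ∀ ε > 0, ∃ z ∈ A, z ∈ diamond (α - ε) (β + ε) (γ - ε) (δ + ε)) :
    ∃ y ∈ closure A, y ∈ diamond α β γ δ := by
  let t : Ioi (0 : ℝ) → Set (ℝ × ℝ) := fun ε =>
    closure A ∩ diamond (α - ε) (β + ε) (γ - ε) (δ + ε)
  have ht_mono : Monotone t := fun ε ε' (hεε' : (ε : ℝ) ≤ ε') => inter_subset_inter_right _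
    (diamond_mono (by linarith) (by linarith) (by linarith) (by linarith))
  obtain ⟨y, hy⟩ := IsCompact.nonempty_iInter_of_directed_nonempty_isCompact_isClosed t
    ht_mono.directed_ge (fun ε => (h ε ε.2).imp fun z ⟨hzA, hz⟩ => ⟨subset_closure hzA, hz⟩)
    (fun _ => (isCompact_diamond _ _ _ _).inter_left isClosed_closure)
    (fun _ => isClosed_closure.inter (isCompact_diamond _ _ _ _).isClosed)
  simp only [t, mem_iInter, Subtype.forall, mem_Ioi] at hy
  exact ⟨y, (hy 1 one_pos).1, mem_diamond_of_forall_pos fun ε hε => (hy ε hε).2⟩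

namespace Orthoconvex

variable {B : Set (ℝ × ℝ)} {α β γ δ ε : ℝ} {a b c d : ℝ × ℝ}

-- `((α + δ) / 2, (α - δ) / 2)` and `((β + γ) / 2, (β - γ) / 2)` are the bottom and top vertices
-- of `diamond α β γ δ`; up to `ε`, the points `a, b, c, d` lie beyond its four sides.
theorem exists_mem_diamond_of_wide (hB : Orthoconvex B) (hB' : IsPreconnected B)
    (hαβ : α ≤ β) (hγδ : γ ≤ δ) (hε : 0 ≤ ε) (hwide : δ - γ ≤ β - α)
    (ha : a ∈ B) (hb : b ∈ B) (hc : c ∈ B) (hd : d ∈ B)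
    (ha₁ : (α + δ) / 2 - ε ≤ a.1) (ha₂ : (α - γ) / 2 - ε ≤ a.2)
    (hb₁ : b.1 ≤ (β + γ) / 2 + ε) (hb₂ : b.2 ≤ (β - δ) / 2 + ε)
    (hc₁ : (β + γ) / 2 - ε ≤ c.1) (hc₂ : c.2 ≤ (α - γ) / 2 + ε)
    (hd₁ : d.1 ≤ (α + δ) / 2 + ε) (hd₂ : (β - δ) / 2 - ε ≤ d.2) :
    ∃ z ∈ B, z ∈ diamond (α - 4 * ε) (β + 4 * ε) (γ - 4 * ε) (δ + 4 * ε) := by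
  obtain ⟨k, ⟨hkB, hk₂⟩, hk₁⟩ := (hB.isPreconnected_inter_snd_Ici hB' ((α - δ) / 2 - ε))
    |>.exists_apply_mem_Icc continuous_fst.continuousOn (p := d) (q := a)
      ⟨hd, show _ ≤ d.2 by linarith⟩ ⟨ha, show _ ≤ a.2 by linarith⟩
      (a := (α + δ) / 2 - ε) (b := (α + δ) / 2 + ε) (by linarith) hd₁ ha₁
  obtain ⟨l, ⟨hlB, hl₂⟩, hl₁⟩ := (hB.isPreconnected_inter_snd_Iic hB' ((β - γ) / 2 + ε))
    |>.exists_apply_mem_Icc continuous_fst.continuousOn (p := b) (q := c)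
      ⟨hb, show b.2 ≤ _ by linarith⟩ ⟨hc, show c.2 ≤ _ by linarith⟩
      (a := (β + γ) / 2 - ε) (b := (β + γ) / 2 + ε) (by linarith) hb₁ hc₁
  simp only [mem_preimage, mem_Ici, mem_Iic, mem_Icc] at hk₁ hk₂ hl₁ hl₂
  have hstrip := (hB.inter (orthoconvex_preimage_fst ordConnected_Ici))
    |>.isPreconnected_inter_fst_Iic (hB.isPreconnected_inter_fst_Ici hB' ((α + δ) / 2 - ε))
      ((β + γ) / 2 + ε)
  obtain ⟨z, ⟨⟨hzB, hz₁⟩, hz₁'⟩, hz⟩ := hstrip.exists_apply_mem_Icc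
    (f := fun p => p.1 - p.2) (by fun_prop) (p := k) (q := l)
    ⟨⟨hkB, hk₁.1⟩, show k.1 ≤ _ by linarith⟩ ⟨⟨hlB, show _ ≤ l.1 by linarith⟩, hl₁.2⟩
    (a := γ - 2 * ε) (b := δ + 2 * ε) (by linarith) (by linarith) (by linarith)
  simp only [mem_preimage, mem_Ici, mem_Iic, mem_Icc] at hz₁ hz₁' hz
  exact ⟨z, hzB, ⟨by linarith, by linarith⟩, by linarith, by linarith⟩

theorem exists_mem_diamond (hB : Orthoconvex B) (hB' : IsPreconnected B)
    (hαβ : α ≤ β) (hγδ : γ ≤ δ) (hε : 0 ≤ ε)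
    (ha : a ∈ B) (hb : b ∈ B) (hc : c ∈ B) (hd : d ∈ B)
    (ha₁ : (α + δ) / 2 - ε ≤ a.1) (ha₂ : (α - γ) / 2 - ε ≤ a.2)
    (hb₁ : b.1 ≤ (β + γ) / 2 + ε) (hb₂ : b.2 ≤ (β - δ) / 2 + ε)
    (hc₁ : (β + γ) / 2 - ε ≤ c.1) (hc₂ : c.2 ≤ (α - γ) / 2 + ε)
    (hd₁ : d.1 ≤ (α + δ) / 2 + ε) (hd₂ : (β - δ) / 2 - ε ≤ d.2) :
    ∃ z ∈ B, z ∈ diamond (α - 4 * ε) (β + 4 * ε) (γ - 4 * ε) (δ + 4 * ε) := by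
  rcases le_total (δ - γ) (β - α) with hwide | htall
  · exact hB.exists_mem_diamond_of_wide hB' hαβ hγδ hε hwide ha hb hc hd
      ha₁ ha₂ hb₁ hb₂ hc₁ hc₂ hd₁ hd₂
  -- The reflection `(x, y) ↦ (x, -y)` exchanges the two diagonal coordinates.
  obtain ⟨z, hzB, hz⟩ := hB.preimage_reflect.exists_mem_diamond_of_wide
    (isPreconnected_preimage_reflect hB') hγδ hαβ hε htall
    (a := (c.1, -c.2)) (b := (d.1, -d.2)) (c := (a.1, -a.2)) (d := (b.1, -b.2))
    (by simpa using hc) (by simpa using hd) (by simpa using ha) (by simpa using hb)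
    (by linarith) (by linarith) (by linarith) (by linarith)
    (by linarith) (by linarith) (by linarith) (by linarith)
  refine ⟨_, hzB, ?_⟩
  simp only [diamond, mem_ofPred_eq, mem_Icc, Prod.map_fst, Prod.map_snd, id_eq] at hz ⊢
  constructor <;> constructor <;> linarith

end Orthoconvex

theorem taxiDist_le_iff {p q : ℝ × ℝ} {r : ℝ} :
    taxiDist p q ≤ r ↔
      |(p.1 + p.2) - (q.1 + q.2)| ≤ r ∧ |(p.1 - p.2) - (q.1 - q.2)| ≤ r := by
  simp only [taxiDist, abs_le]
  constructor
  · intro h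
    cases abs_cases (p.1 - q.1) <;> cases abs_cases (p.2 - q.2) <;>
      exact ⟨⟨by linarith, by linarith⟩, by linarith, by linarith⟩
  · rintro ⟨⟨h₁, h₂⟩, h₃, h₄⟩
    cases abs_cases (p.1 - q.1) <;> cases abs_cases (p.2 - q.2) <;> linarith

theorem exists_isLUB_isGLB_le {ι : Type*} [Nonempty ι] {c r : ι → ℝ}
    (h : ∀ i j, c i - r i ≤ c j + r j) :
    ∃ s t, IsLUB (range fun i => c i - r i) s ∧ IsGLB (range fun i => c i + r i) t ∧ s ≤ t := by
  obtain ⟨j⟩ := ‹Nonempty ι›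
  obtain ⟨s, hs⟩ := Real.exists_isLUB (range_nonempty _)
    ⟨c j + r j, forall_mem_range.2 fun i => h i j⟩
  obtain ⟨t, ht⟩ := Real.exists_isGLB (range_nonempty _)
    ⟨c j - r j, forall_mem_range.2 fun i => h j i⟩
  exact ⟨s, t, hs, ht, hs.2 <| forall_mem_range.2 fun i => ht.2 <| forall_mem_range.2 (h i)⟩

theorem Orthoconvex.exists_mem_diamond_of_isLUB {B : Set (ℝ × ℝ)} (hB : Orthoconvex B)
    (hB' : IsPreconnected B) {ι : Type*} {x : ι → ℝ × ℝ} {r : ι → ℝ}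
    (hx : ∀ i, x i ∈ closure B) {α β γ δ : ℝ} (hαβ : α ≤ β) (hγδ : γ ≤ δ)
    (hα : IsLUB (range fun i => (x i).1 + (x i).2 - r i) α)
    (hβ : IsGLB (range fun i => (x i).1 + (x i).2 + r i) β)
    (hγ : IsLUB (range fun i => (x i).1 - (x i).2 - r i) γ)
    (hδ : IsGLB (range fun i => (x i).1 - (x i).2 + r i) δ) {ε : ℝ} (hε : 0 < ε) :
    ∃ z ∈ B, z ∈ diamond (α - ε) (β + ε) (γ - ε) (δ + ε) := by
  have hη : 0 < ε / 8 := by positivity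
  have hnear : ∀ i, ∃ p ∈ B, |p.1 - (x i).1| < ε / 8 ∧ |p.2 - (x i).2| < ε / 8 := fun i => by
    obtain ⟨p, hpB, hp⟩ := Metric.mem_closure_iff.1 (hx i) _ hη
    rw [Prod.dist_eq, max_lt_iff, Real.dist_eq, Real.dist_eq] at hp
    exact ⟨p, hpB, abs_sub_comm p.1 _ ▸ hp.1, abs_sub_comm p.2 _ ▸ hp.2⟩
  obtain ⟨_, ⟨i₁, rfl⟩, hi₁, -⟩ := hα.exists_between (sub_lt_self α hη)
  obtain ⟨_, ⟨i₂, rfl⟩, -, hi₂⟩ := hβ.exists_between (lt_add_of_pos_right β hη)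
  obtain ⟨_, ⟨i₃, rfl⟩, hi₃, -⟩ := hγ.exists_between (sub_lt_self γ hη)
  obtain ⟨_, ⟨i₄, rfl⟩, -, hi₄⟩ := hδ.exists_between (lt_add_of_pos_right δ hη)
  obtain ⟨a, ha, ha₁, ha₂⟩ := hnear i₁
  obtain ⟨b, hb, hb₁, hb₂⟩ := hnear i₂
  obtain ⟨c, hc, hc₁, hc₂⟩ := hnear i₃
  obtain ⟨d, hd, hd₁, hd₂⟩ := hnear i₄
  rw [abs_lt] at ha₁ ha₂ hb₁ hb₂ hc₁ hc₂ hd₁ hd₂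
  have hball : ∀ i, (x i).1 + (x i).2 - r i ≤ α ∧ β ≤ (x i).1 + (x i).2 + r i ∧
      (x i).1 - (x i).2 - r i ≤ γ ∧ δ ≤ (x i).1 - (x i).2 + r i := fun i =>
    ⟨hα.1 (mem_range_self i), hβ.1 (mem_range_self i), hγ.1 (mem_range_self i),
      hδ.1 (mem_range_self i)⟩
  obtain ⟨-, -, h₁γ, h₁δ⟩ := hball i₁
  obtain ⟨-, -, h₂γ, h₂δ⟩ := hball i₂
  obtain ⟨h₃α, h₃β, -, -⟩ := hball i₃
  obtain ⟨h₄α, h₄β, -, -⟩ := hball i₄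
  obtain ⟨z, hz, hzε⟩ := hB.exists_mem_diamond hB' hαβ hγδ (ε := ε / 4) (by positivity)
    ha hb hc hd (by linarith) (by linarith) (by linarith) (by linarith)
    (by linarith) (by linarith) (by linarith) (by linarith)
  exact ⟨z, hz, diamond_mono (by linarith) (by linarith) (by linarith) (by linarith) hzε⟩

/-- If `A` is an L-invariant subset of the Manhattan plane (path connected with
`L(A) = A`), then the closure of `A`, with the induced taxicab metric, is hyperconvex. -/
theorem closure_hyperconvex_of_LInvariant (A : Set (ℝ × ℝ)) (hA : IsPathConnected A)
    (hL : doubleHatch A = A) :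
    TaxiHyperconvexOn (closure A) := by
  intro I x r hx _ hxr
  rcases isEmpty_or_nonempty I with hI | hI
  · obtain ⟨p, hp⟩ := hA.nonempty
    exact ⟨p, subset_closure hp, isEmptyElim⟩
  have hpair := fun i j => taxiDist_le_iff.1 (hxr i j)
  obtain ⟨α, β, hα, hβ, hαβ⟩ := exists_isLUB_isGLB_le (c := fun i => (x i).1 + (x i).2) (r := r)
    fun i j => by linarith [(abs_le.1 (hpair i j).1).2]
  obtain ⟨γ, δ, hγ, hδ, hγδ⟩ := exists_isLUB_isGLB_le (c := fun i => (x i).1 - (x i).2) (r := r)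
    fun i j => by linarith [(abs_le.1 (hpair i j).2).2]
  obtain ⟨y, hyA, hyu, hyv⟩ := exists_mem_closure_diamond fun ε hε =>
    (orthoconvex_of_doubleHatch_eq hL).exists_mem_diamond_of_isLUB hA.isConnected.isPreconnected
      hx hαβ hγδ hα hβ hγ hδ hε
  refine ⟨y, hyA, fun i => taxiDist_le_iff.2 ⟨abs_le.2 ⟨?_, ?_⟩, abs_le.2 ⟨?_, ?_⟩⟩⟩
  · linarith [hβ.1 (mem_range_self i), hyu.2]
  · linarith [hα.1 (mem_range_self i), hyu.1]
  · linarith [hδ.1 (mem_range_self i), hyv.2]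
  · linarith [hγ.1 (mem_range_self i), hyv.1]
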